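/- If Dom(α) ⊆ Y and Dom(α) is nonempty, where α ∈ POPI_n(Y), then there exists β ∈ POPI_n(Y) with Dom(β) = Im(α), Im(β) ⊆ Y, β orientation-preserving and injective, such that αβα = α. In particular every α ∈ POPI_n(Y) with Dom(α) ⊆ Y is regular. -/

import Mathlib

open scoped Classical

namespace POPIpaper

/-- Partial transformations of `Ω_n = {1,…,n}`, modelled on `Fin n`. -/
abbrev PT (n : ℕ) := Fin n → Option (Fin n)

/-- Composition of partial transformations (apply `α` first, then `β`). -/
def comp {n : ℕ} (α β : PT n) : PT n := fun x => (α x).bind β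

/-- Domain of a partial transformation. -/
noncomputable def dom {n : ℕ} (α : PT n) : Finset (Fin n) :=
  Finset.univ.filter (fun x => (α x).isSome)

/-- Image of a partial transformation. -/
noncomputable def im {n : ℕ} (α : PT n) : Finset (Fin n) :=
  Finset.univ.filter (fun y => ∃ x, α x = some y)

/-- rank(α) = |Im(α)|. -/
noncomputable def rank {n : ℕ} (α : PT n) : ℕ := (im α).card

/-- Injectivity of a partial transformation. -/
def Inj {n : ℕ} (α : PT n) : Prop :=
  ∀ x y z : Fin n, α x = some z → α y = some z → x = y

/-- Orientation-preserving: the sequence of images, taken along the increasing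
enumeration of the domain, is cyclic, i.e. some rotation of it is sorted. -/
def OP {n : ℕ} (α : PT n) : Prop :=
  ∃ k : ℕ, (((List.finRange n).filterMap α).rotate k).Pairwise (· ≤ ·)

/-- The semigroup `POPI_n(Y)` as a set of partial transformations:
injective, orientation-preserving, with image contained in `Y`. -/
def POPI (n : ℕ) (Y : Finset (Fin n)) : Set (PT n) :=
  {α | Inj α ∧ OP α ∧ ∀ x y : Fin n, α x = some y → y ∈ Y}

/-- Regularity of `α` as an element of the subsemigroup `S`. -/
def IsRegularIn {n : ℕ} (S : Set (PT n)) (α : PT n) : Prop :=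
  ∃ β ∈ S, comp (comp α β) α = α

/-- The partial identity on a subset `A`. -/
def idp {n : ℕ} (A : Finset (Fin n)) : PT n :=
  fun x => if x ∈ A then some x else none

/-- Fixed points of a partial transformation. -/
noncomputable def fix {n : ℕ} (α : PT n) : Finset (Fin n) :=
  Finset.univ.filter (fun x => α x = some x)

/-- Green's relation ℒ on the set `S`: `S¹α = S¹β`. -/
def LRel {n : ℕ} (S : Set (PT n)) (α β : PT n) : Prop :=
  (α = β ∨ ∃ γ ∈ S, comp γ β = α) ∧ (β = α ∨ ∃ γ ∈ S, comp γ α = β)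

/-- Green's relation ℛ on the set `S`: `αS¹ = βS¹`. -/
def RRel {n : ℕ} (S : Set (PT n)) (α β : PT n) : Prop :=
  (α = β ∨ ∃ γ ∈ S, comp β γ = α) ∧ (β = α ∨ ∃ γ ∈ S, comp α γ = β)

/-- Green's relation ℋ = ℒ ∩ ℛ. -/
def HRel {n : ℕ} (S : Set (PT n)) (α β : PT n) : Prop :=
  LRel S α β ∧ RRel S α β

/-- Green's relation 𝒟 = ℒ ∘ ℛ. -/
def DRel {n : ℕ} (S : Set (PT n)) (α β : PT n) : Prop :=
  ∃ γ ∈ S, LRel S α γ ∧ RRel S γ β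

/-- `Φ` is a semigroup isomorphism from the subsemigroup `S` onto `T`. -/
def IsIso {n : ℕ} (S T : Set (PT n)) (Φ : PT n → PT n) : Prop :=
  Set.BijOn Φ S T ∧ ∀ a ∈ S, ∀ b ∈ S, Φ (comp a b) = comp (Φ a) (Φ b)

/-- The product `β * l₁ * ⋯ * l_k` of a nonempty list of partial transformations. -/
def prodList {n : ℕ} (β : PT n) (l : List (PT n)) : PT n := l.foldl comp β

/-!
The inverse `β` is the partial inverse `α⁻¹ : Im(α) → Dom(α)`, whose image is
`Dom(α) ⊆ Y`.
Listing `Im(α)` increasingly and applying `α⁻¹` gives the sequence of images of `α⁻¹`;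
since `α` is orientation-preserving, the increasing listing of `Im(α)` is a rotation of the
sequence of images of `α`, which `α⁻¹` maps back to the increasing listing of `Dom(α)`.
So the sequence of images of `α⁻¹` is a rotation of a sorted list.
-/

theorem _root_.List.IsRotated.filterMap {γ δ : Type*} {l l' : List γ} (h : l ~r l')
    (f : γ → Option δ) : l.filterMap f ~r l'.filterMap f := by
  obtain ⟨k, rfl⟩ := h
  rw [List.rotate_eq_drop_append_take_mod, List.filterMap_append]
  conv_lhs => rw [← List.take_append_drop (k % l.length) l, List.filterMap_append]
  exact List.isRotated_append

theorem _root_.List.filterMap_finRange_eq_of_pairwise_lt {n : ℕ} {δ : Type*}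
    {g : Fin n → Option δ} {l : List (Fin n)} (hl : l.Pairwise (· < ·))
    (hmem : ∀ y, y ∈ l ↔ (g y).isSome) :
    (List.finRange n).filterMap g = l.filterMap g := by
  have hfilter : (List.finRange n).filter (fun y => (g y).isSome) = l :=
    ((List.pairwise_lt_finRange n).filter _).eq_of_mem_iff hl (by simp [hmem])
  rw [← hfilter, List.filterMap_filter]
  congr 1
  funext y
  cases g y <;> rfl

variable {n : ℕ}

noncomputable def pinv (α : PT n) : PT n :=
  fun y => if h : ∃ x, α x = some y then some h.choose else none

lemma apply_eq_of_pinv_eq_some {α : PT n} {x y : Fin n} (h : pinv α y = some x) :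
    α x = some y := by
  unfold pinv at h
  split at h
  · next hex => cases h; exact hex.choose_spec
  · simp at h

lemma pinv_eq_some_iff {α : PT n} (hα : Inj α) {x y : Fin n} :
    pinv α y = some x ↔ α x = some y := by
  refine ⟨apply_eq_of_pinv_eq_some, fun h => ?_⟩
  have hex : ∃ x, α x = some y := ⟨x, h⟩
  rw [pinv, dif_pos hex, hα _ _ _ hex.choose_spec h]

lemma isSome_pinv_iff {α : PT n} {y : Fin n} : (pinv α y).isSome ↔ ∃ x, α x = some y := by
  unfold pinv
  split <;> simp_all

lemma inj_pinv (α : PT n) : Inj (pinv α) := fun _ _ _ h₁ h₂ =>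
  Option.some.inj ((apply_eq_of_pinv_eq_some h₁).symm.trans (apply_eq_of_pinv_eq_some h₂))

lemma dom_pinv (α : PT n) : dom (pinv α) = im α := by
  ext y
  simp [dom, im, isSome_pinv_iff]

lemma mem_dom_of_pinv_eq_some {α : PT n} {x y : Fin n} (h : pinv α y = some x) :
    x ∈ dom α := by
  simp [dom, apply_eq_of_pinv_eq_some h]

lemma comp_pinv {α : PT n} (hα : Inj α) : comp α (pinv α) = idp (dom α) := by
  funext x
  cases hx : α x with
  | none => simp [comp, idp, dom, hx]
  | some y => simp [comp, idp, dom, hx, (pinv_eq_some_iff hα).mpr hx]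

lemma comp_comp_pinv_self {α : PT n} (hα : Inj α) : comp (comp α (pinv α)) α = α := by
  funext x
  cases hx : α x with
  | none => simp [comp, hx]
  | some y => simp [comp, hx, (pinv_eq_some_iff hα).mpr hx]

lemma pairwise_lt_filterMap_idp (A : Finset (Fin n)) :
    ((List.finRange n).filterMap (idp A)).Pairwise (· < ·) := by
  rw [List.pairwise_filterMap]
  refine (List.pairwise_lt_finRange n).imp fun hlt b hb b' hb' => ?_
  simp only [idp, Option.ite_none_right_eq_some, Option.some.injEq] at hb hb'
  rw [← hb.2, ← hb'.2]
  exact hlt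

lemma op_pinv {α : PT n} (hα : Inj α) (hop : OP α) : OP (pinv α) := by
  obtain ⟨k, hsorted⟩ := hop
  set L := (List.finRange n).filterMap α
  have hnodup : (L.rotate k).Nodup :=
    List.nodup_rotate.mpr ((List.nodup_finRange n).filterMap hα)
  have hsorted_lt : (L.rotate k).Pairwise (· < ·) :=
    (hsorted.and hnodup).imp fun h => lt_of_le_of_ne h.1 h.2
  have hmem : ∀ y, y ∈ L.rotate k ↔ (pinv α y).isSome := by
    simp [L, isSome_pinv_iff]
  have hback : L.filterMap (pinv α) = (List.finRange n).filterMap (idp (dom α)) := by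
    rw [List.filterMap_filterMap, ← comp_pinv hα]
    rfl
  obtain ⟨j, hj⟩ : (List.finRange n).filterMap (pinv α) ~r
      (List.finRange n).filterMap (idp (dom α)) := by
    rw [List.filterMap_finRange_eq_of_pairwise_lt hsorted_lt hmem, ← hback]
    exact List.IsRotated.filterMap (List.IsRotated.symm ⟨k, rfl⟩) _
  exact ⟨j, hj ▸ (pairwise_lt_filterMap_idp _).imp le_of_lt⟩

lemma pinv_mem_POPI {Y : Finset (Fin n)} {α : PT n} (hα : α ∈ POPI n Y) (hdom : dom α ⊆ Y) :
    pinv α ∈ POPI n Y :=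
  ⟨inj_pinv α, op_pinv hα.1 hα.2.1, fun _ _ h => hdom (mem_dom_of_pinv_eq_some h)⟩

theorem exists_inverse_of_dom_subset_general {n : ℕ} (Y : Finset (Fin n))
    (α : PT n) (hα : α ∈ POPI n Y) (hdom : dom α ⊆ Y) :
    ((dom α).Nonempty →
      ∃ β ∈ POPI n Y, dom β = im α ∧ comp (comp α β) α = α) ∧
    IsRegularIn (POPI n Y) α :=
  have hβ := pinv_mem_POPI hα hdom
  have hαβα := comp_comp_pinv_self hα.1
  ⟨fun _ => ⟨pinv α, hβ, dom_pinv α, hαβα⟩, ⟨pinv α, hβ, hαβα⟩⟩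

/-- if `Dom(α) ⊆ Y` and `Dom(α) ≠ ∅` there is `β ∈ POPI_n(Y)` with
`Dom(β) = Im(α)` and `αβα = α`; in particular every `α` with `Dom(α) ⊆ Y` is regular. -/
theorem exists_inverse_of_dom_subset {n : ℕ} (Y : Finset (Fin n)) (hY : Y.Nonempty)
    (α : PT n) (hα : α ∈ POPI n Y) (hdom : dom α ⊆ Y) :
    ((dom α).Nonempty →
      ∃ β ∈ POPI n Y, dom β = im α ∧ comp (comp α β) α = α) ∧
    IsRegularIn (POPI n Y) α :=
  exists_inverse_of_dom_subset_general Y α hα hdom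

end POPIpaper
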